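/- Let m >= 0 and n >= 1 be integers. Then Y^(m)(n) = sum over pairs (t,s) of positive integers with t*(t+s) = n, s odd and s >= 2m+1 of (-1)^t, minus the sum over pairs (t,s) of positive integers with t*(t+s) = 2n, s odd and s >= 2m+1 of (-1)^t. -/

import Mathlib

/-- The geometric series `1/(1-q^k) = ∑_{j ≥ 0} q^{k·j}` as a formal power series over `ℤ`:
its coefficient at `q^n` is `1` exactly when `k ∣ n`. -/
def geomSer (k : ℕ) : PowerSeries ℤ := PowerSeries.mk fun n => if k ∣ n then 1 else 0

/-- The formal power series `∑_{k ≥ 1} (-1)^k q^{k(3k+1)+2mk}/(1-q^{2k})`.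
For a fixed `n`, only the (finitely many) summands with `1 ≤ k ≤ n` can contribute to the
coefficient of `q^n` (for `k > n` the lowest exponent `k(3k+1)+2mk` exceeds `n`), so the
coefficient of `q^n` of the infinite sum is the corresponding finite sum of coefficients. -/
noncomputable def seriesA (m : ℕ) : PowerSeries ℤ :=
  PowerSeries.mk fun n => ∑ k ∈ Finset.Icc 1 n,
    (PowerSeries.coeff (R := ℤ) n)
      (PowerSeries.C (R := ℤ) ((-1) ^ k) * PowerSeries.X ^ (k * (3 * k + 1) + 2 * m * k) *
        geomSer (2 * k))

/-- The formal power series `∑_{k ≥ 1} (-1)^k q^{k(k+1)/2+mk}/(1-q^k)` (same convention). -/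
noncomputable def seriesB (m : ℕ) : PowerSeries ℤ :=
  PowerSeries.mk fun n => ∑ k ∈ Finset.Icc 1 n,
    (PowerSeries.coeff (R := ℤ) n)
      (PowerSeries.C (R := ℤ) ((-1) ^ k) * PowerSeries.X ^ (k * (k + 1) / 2 + m * k) * geomSer k)

/-- The formal power series `∑_{k ≥ 1} (-1)^k q^{k(k+1)+2mk}/(1-q^{2k})` (same convention). -/
noncomputable def seriesC (m : ℕ) : PowerSeries ℤ :=
  PowerSeries.mk fun n => ∑ k ∈ Finset.Icc 1 n,
    (PowerSeries.coeff (R := ℤ) n)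
      (PowerSeries.C (R := ℤ) ((-1) ^ k) * PowerSeries.X ^ (k * (k + 1) + 2 * m * k) *
        geomSer (2 * k))

/-!
The coefficient of `q^n` in `q^e/(1-q^d)` is `1` exactly when `n = e + d j` for some `j ≥ 0`.
For the `t`-th summand of `seriesC m`, `e = t(t+2m+1)` and `d = 2t`, and
`n = t(t+2m+1) + 2tj` says precisely that `n = t(t+s)` with `s = 2m+1+2j` odd and `≥ 2m+1`;
such an `s` is unique for given `t`. For `seriesB m`, doubling
`n = t(t+1)/2 + mt + tj` gives `2n = t(t+2m+1) + 2tj`, the same condition with `2n` in place of `n`.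
-/

open PowerSeries Finset

lemma coeff_C_mul_X_pow_mul_geomSer (a : ℤ) (e d n : ℕ) :
    coeff n (C a * X ^ e * geomSer d) = if e ≤ n ∧ d ∣ n - e then a else 0 := by
  rw [mul_assoc, coeff_C_mul, coeff_X_pow_mul', geomSer, coeff_mk]
  by_cases he : e ≤ n <;> simp [he]

lemma Nat.le_and_dvd_sub_iff {e d n : ℕ} : e ≤ n ∧ d ∣ n - e ↔ ∃ j, n = e + d * j :=
  ⟨fun ⟨_, j, hj⟩ => ⟨j, by omega⟩, fun ⟨j, hj⟩ => ⟨by omega, j, by omega⟩⟩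

lemma exists_odd_mul_add_eq_iff (t N m : ℕ) :
    (∃ s, t * (t + s) = N ∧ Odd s ∧ 2 * m + 1 ≤ s) ↔ ∃ j, N = t * (t + 2 * m + 1) + 2 * t * j := by
  constructor
  · rintro ⟨s, rfl, ⟨c, rfl⟩, hs⟩
    obtain ⟨j, rfl⟩ : ∃ j, c = m + j := ⟨c - m, by omega⟩
    exact ⟨j, by ring⟩
  · rintro ⟨j, rfl⟩
    exact ⟨2 * m + 1 + 2 * j, by ring, ⟨m + j, by ring⟩, by omega⟩

lemma Finset.sum_ite_eq_ite_of_exists_iff {α M : Type*} [AddCommMonoid M] {S : Finset α}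
    {P : α → Prop} [DecidablePred P] {Q : Prop} [Decidable Q] (hQ : Q ↔ ∃ a, P a)
    (hP : ∀ a b, P a → P b → a = b) (hS : ∀ a, P a → a ∈ S) (v : M) :
    ∑ a ∈ S, (if P a then v else 0) = if Q then v else 0 := by
  split_ifs with h
  · obtain ⟨a, ha⟩ := hQ.mp h
    rw [sum_eq_single_of_mem a (hS a ha) fun b _ hba => if_neg fun hb => hba (hP b a hb ha),
      if_pos ha]
  · exact sum_eq_zero fun a _ => if_neg fun ha => h (hQ.mpr ⟨a, ha⟩)

lemma sum_filter_mul_add_eq {M : Type*} [AddCommMonoid M] (N m : ℕ) (v : ℕ → M) :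
    ∑ p ∈ (Icc 1 N ×ˢ Icc 1 N).filter
        (fun p : ℕ × ℕ => p.1 * (p.1 + p.2) = N ∧ Odd p.2 ∧ 2 * m + 1 ≤ p.2), v p.1 =
      ∑ t ∈ Icc 1 N,
        if t * (t + 2 * m + 1) ≤ N ∧ 2 * t ∣ N - t * (t + 2 * m + 1) then v t else 0 := by
  rw [sum_filter, sum_product]
  refine sum_congr rfl fun t ht => ?_
  replace ht : 0 < t := (mem_Icc.mp ht).1
  refine sum_ite_eq_ite_of_exists_iff
    (Nat.le_and_dvd_sub_iff.trans (exists_odd_mul_add_eq_iff t N m).symm) ?_ ?_ (v t)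
  · rintro a b ⟨ha, -⟩ ⟨hb, -⟩
    exact Nat.add_left_cancel (Nat.eq_of_mul_eq_mul_left ht (ha.trans hb.symm))
  · rintro s ⟨hs, hodd, -⟩
    have : t + s ≤ N := hs ▸ Nat.le_mul_of_pos_left _ ht
    exact mem_Icc.mpr ⟨hodd.pos, by omega⟩

lemma coeff_seriesC (m n : ℕ) :
    coeff n (seriesC m) = ∑ t ∈ Icc 1 n,
      if t * (t + 2 * m + 1) ≤ n ∧ 2 * t ∣ n - t * (t + 2 * m + 1) then (-1 : ℤ) ^ t else 0 := by
  rw [seriesC, coeff_mk]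
  refine sum_congr rfl fun t _ => ?_
  rw [coeff_C_mul_X_pow_mul_geomSer, show t * (t + 1) + 2 * m * t = t * (t + 2 * m + 1) by ring]

lemma coeff_seriesB (m n : ℕ) :
    coeff n (seriesB m) = ∑ t ∈ Icc 1 (2 * n),
      if t * (t + 2 * m + 1) ≤ 2 * n ∧ 2 * t ∣ 2 * n - t * (t + 2 * m + 1)
      then (-1 : ℤ) ^ t else 0 := by
  have hcond (t : ℕ) : (t * (t + 1) / 2 + m * t ≤ n ∧ t ∣ n - (t * (t + 1) / 2 + m * t)) ↔
      (t * (t + 2 * m + 1) ≤ 2 * n ∧ 2 * t ∣ 2 * n - t * (t + 2 * m + 1)) := by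
    have htri : 2 * (t * (t + 1) / 2) = t * (t + 1) :=
      Nat.mul_div_cancel' (Nat.even_mul_succ_self t).two_dvd
    simp only [Nat.le_and_dvd_sub_iff]
    refine exists_congr fun j => ?_
    constructor <;> intro h <;> nlinarith
  rw [seriesB, coeff_mk]
  simp only [coeff_C_mul_X_pow_mul_geomSer, hcond]
  refine sum_subset (Icc_subset_Icc le_rfl (by omega)) fun t ht ht' => if_neg ?_
  rintro ⟨h, -⟩
  simp only [mem_Icc, not_and, not_le] at ht ht'
  nlinarith [ht' ht.1]

theorem stmt15_general (m : ℕ) (Y : ℕ → ℤ)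
    (hY : PowerSeries.mk Y = seriesC m - seriesB m)
    (n : ℕ) :
    Y n =
      (∑ p ∈ (Finset.Icc 1 n ×ˢ Finset.Icc 1 n).filter
          (fun p : ℕ × ℕ => p.1 * (p.1 + p.2) = n ∧ Odd p.2 ∧ 2 * m + 1 ≤ p.2),
        (-1 : ℤ) ^ p.1)
      - ∑ p ∈ (Finset.Icc 1 (2 * n) ×ˢ Finset.Icc 1 (2 * n)).filter
          (fun p : ℕ × ℕ => p.1 * (p.1 + p.2) = 2 * n ∧ Odd p.2 ∧ 2 * m + 1 ≤ p.2),
        (-1 : ℤ) ^ p.1 := by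
  have hYn : Y n = coeff n (seriesC m) - coeff n (seriesB m) := by
    simpa using congrArg (coeff n) hY
  rw [hYn, coeff_seriesC, coeff_seriesB, sum_filter_mul_add_eq, sum_filter_mul_add_eq]

/-- Let `m ≥ 0` and `n ≥ 1` be integers. Then
`Y^(m)(n) = ∑_{t(t+s)=n, t≥1, s≥2m+1 odd} (-1)^t - ∑_{t(t+s)=2n, t≥1, s≥2m+1 odd} (-1)^t`
(both sums over pairs `(t,s)` of positive integers; note such pairs satisfy `t,s ≤ n`,
resp. `t,s ≤ 2n`, so the sums can be taken over the finite ranges below). -/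
theorem stmt15 (m : ℕ) (Y : ℕ → ℤ)
    (hY : PowerSeries.mk Y = seriesC m - seriesB m)
    (n : ℕ) (hn : 1 ≤ n) :
    Y n =
      (∑ p ∈ (Finset.Icc 1 n ×ˢ Finset.Icc 1 n).filter
          (fun p : ℕ × ℕ => p.1 * (p.1 + p.2) = n ∧ Odd p.2 ∧ 2 * m + 1 ≤ p.2),
        (-1 : ℤ) ^ p.1)
      - ∑ p ∈ (Finset.Icc 1 (2 * n) ×ˢ Finset.Icc 1 (2 * n)).filter
          (fun p : ℕ × ℕ => p.1 * (p.1 + p.2) = 2 * n ∧ Odd p.2 ∧ 2 * m + 1 ≤ p.2),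
        (-1 : ℤ) ^ p.1 :=
  stmt15_general m Y hY n
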